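/- Let P be a homogeneous polynomial of degree k ≥ 2 on ℝ^{n+1} solving H(P) = c·P^m with m = (n+1)(k-2)/k. Then on the set where P ≠ 0, H(log|P|) = (c/(1-k))·P^{-2(n+1)/k}. -/

import Mathlib

/-- The `i`-th partial derivative of `F` at `x`. -/
noncomputable def pderivAt {n : ℕ} (F : (Fin n → ℝ) → ℝ) (i : Fin n) (x : Fin n → ℝ) : ℝ :=
  fderiv ℝ F x (Pi.single i 1)

/-- The Hessian matrix of second partial derivatives of `F` at `x`. -/
noncomputable def hessMatrix {n : ℕ} (F : (Fin n → ℝ) → ℝ) (x : Fin n → ℝ) :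
    Matrix (Fin n) (Fin n) ℝ :=
  Matrix.of fun i j => pderivAt (fun y => pderivAt F j y) i x

/-- The Hessian determinant of `F` at `x`. -/
noncomputable def hessDet {n : ℕ} (F : (Fin n → ℝ) → ℝ) (x : Fin n → ℝ) : ℝ :=
  (hessMatrix F x).det

/-!
Write `f = P x`, `g = ∇P x` and `H = Hess P x`. A direct computation gives
`Hess (log |P|) x = f⁻¹ • M` with `M = H - f⁻¹ • g gᵀ`. Euler's identity for `P` and for its
partial derivatives gives `xᵀ g = k f` and `xᵀ H = (k - 1) gᵀ`, hence `xᵀ M = -gᵀ`, so that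
`H = (1 - f⁻¹ • g xᵀ) M` and, by the determinant formula for a rank-one perturbation of the
identity, `det H = (1 - k) det M`. Therefore
`det Hess (log |P|) x = f^{-(n+1)} c f^m / (1 - k)`, and `m + 2(n+1)/k = n + 1`.
-/

open MvPolynomial Matrix

theorem MvPolynomial.hasFDerivAt_eval {𝕜 σ : Type*} [NontriviallyNormedField 𝕜] [Fintype σ]
    (p : MvPolynomial σ 𝕜) (x : σ → 𝕜) :
    HasFDerivAt (fun y => eval y p)
      (∑ i, eval x (pderiv i p) • (ContinuousLinearMap.proj i : (σ → 𝕜) →L[𝕜] 𝕜)) x := by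
  classical
  induction p using MvPolynomial.induction_on with
  | C a =>
    simp only [eval_C]
    refine (hasFDerivAt_const a x).congr_fderiv ?_
    ext; simp
  | add p q hp hq =>
    simp only [map_add]
    exact (hp.fun_add hq).congr_fderiv (by ext; simp [Finset.sum_add_distrib, add_mul])
  | mul_X p i hp =>
    simp only [map_mul, eval_X]
    refine (hp.fun_mul (ContinuousLinearMap.proj i).hasFDerivAt).congr_fderiv ?_
    ext v
    simp [pderiv_X, Pi.single_apply, add_mul, Finset.sum_add_distrib, Finset.mul_sum, apply_ite,
      mul_assoc]

theorem MvPolynomial.IsHomogeneous.sum_mul_eval_pderiv {R σ : Type*} [CommSemiring R] [Fintype σ]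
    {p : MvPolynomial σ R} {k : ℕ} (hp : p.IsHomogeneous k) (x : σ → R) :
    ∑ i, x i * eval x (pderiv i p) = k * eval x p := by
  simpa using congrArg (eval x) hp.sum_X_mul_pderiv

theorem Matrix.det_eq_one_sub_mul_det_sub_smul_vecMulVec {K ι : Type*} [Field K] [Fintype ι]
    [DecidableEq ι] {H : Matrix ι ι K} {g x : ι → K} {f a : K} (hf : f ≠ 0)
    (hH : x ᵥ* H = (a - 1) • g) (hxg : x ⬝ᵥ g = a * f) :
    H.det = (1 - a) * (H - f⁻¹ • vecMulVec g g).det := by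
  set M := H - f⁻¹ • vecMulVec g g
  have hxM : x ᵥ* M = -g := by
    rw [vecMul_sub, vecMul_smul, vecMul_vecMulVec, hxg, hH, smul_smul, mul_comm a f,
      inv_mul_cancel_left₀ hf]
    module
  have hfactor : H = (1 - vecMulVec (f⁻¹ • g) x) * M := by
    rw [Matrix.sub_mul, Matrix.one_mul, vecMulVec_mul, hxM, vecMulVec_neg, smul_vecMulVec]
    simp [M]
  have hrank_one : (1 - vecMulVec (f⁻¹ • g) x).det = 1 - a := by
    rw [vecMulVec_eq Unit, det_one_sub_mul_comm, det_unique, sub_apply, one_apply_eq,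
      replicateRow_mul_replicateCol_apply, dotProduct_smul, hxg, smul_eq_mul, mul_comm a f,
      inv_mul_cancel_left₀ hf]
  rw [← hrank_one, ← det_mul, ← hfactor]

theorem add_two_mul_div_eq_of_mul_eq {n k m : ℕ} (hk : 2 ≤ k) (hdvd : k ∣ 2 * n)
    (hm : k * m = n * (k - 2)) : m + 2 * n / k = n := by
  refine Nat.eq_of_mul_eq_mul_left (by omega : 0 < k) ?_
  rw [mul_add, hm, Nat.mul_div_cancel' hdvd]
  obtain ⟨t, rfl⟩ := Nat.exists_eq_add_of_le hk
  rw [Nat.add_sub_cancel_left]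
  ring

noncomputable def gradAt {n : ℕ} (F : (Fin n → ℝ) → ℝ) (x : Fin n → ℝ) : Fin n → ℝ :=
  fun i => pderivAt F i x

section

variable {N k : ℕ} (p : MvPolynomial (Fin N) ℝ)

theorem pderivAt_eval (i : Fin N) (x : Fin N → ℝ) :
    pderivAt (fun y => eval y p) i x = eval x (pderiv i p) := by
  rw [pderivAt, (hasFDerivAt_eval p x).fderiv]
  simp [Pi.single_apply]

theorem hessMatrix_eval (x : Fin N → ℝ) :
    hessMatrix (fun y => eval y p) x = of fun i j => eval x (pderiv i (pderiv j p)) := by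
  simp only [hessMatrix, pderivAt_eval]

theorem pderivAt_log_abs_eval {i : Fin N} {x : Fin N → ℝ} (hx : eval x p ≠ 0) :
    pderivAt (fun y => Real.log |eval y p|) i x = (eval x p)⁻¹ * eval x (pderiv i p) := by
  simp only [Real.log_abs]
  rw [pderivAt, ((hasFDerivAt_eval p x).log hx).fderiv]
  simp [Pi.single_apply]

theorem hessMatrix_log_abs_eval {x : Fin N → ℝ} (hx : eval x p ≠ 0) :
    hessMatrix (fun y => Real.log |eval y p|) x =
      (eval x p)⁻¹ • (hessMatrix (fun y => eval y p) x -
        (eval x p)⁻¹ • vecMulVec (gradAt (fun y => eval y p) x) (gradAt (fun y => eval y p) x)) := by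
  ext i j
  have hnear : ∀ᶠ y in nhds x, eval y p ≠ 0 := (continuous_eval p).continuousAt.eventually_ne hx
  have hlocal : (fun y => pderivAt (fun y => Real.log |eval y p|) j y)
      =ᶠ[nhds x] fun y => (eval y p)⁻¹ * eval y (pderiv j p) :=
    hnear.mono fun y hy => pderivAt_log_abs_eval p hy
  have hderiv : HasFDerivAt (fun y => (eval y p)⁻¹ * eval y (pderiv j p)) _ x :=
    ((hasDerivAt_inv hx).comp_hasFDerivAt x (hasFDerivAt_eval p x)).fun_mul
      (hasFDerivAt_eval (pderiv j p) x)
  rw [hessMatrix, of_apply, pderivAt, hlocal.fderiv_eq, hderiv.fderiv]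
  simp [Pi.single_apply, hessMatrix_eval, gradAt, pderivAt_eval, vecMulVec_apply]
  field_simp
  ring

variable {p}

theorem dotProduct_gradAt_eval (hp : p.IsHomogeneous k) (x : Fin N → ℝ) :
    x ⬝ᵥ gradAt (fun y => eval y p) x = k * eval x p := by
  simp only [dotProduct, gradAt, pderivAt_eval]
  exact hp.sum_mul_eval_pderiv x

theorem vecMul_hessMatrix_eval (hp : p.IsHomogeneous k) (hk : 1 ≤ k) (x : Fin N → ℝ) :
    x ᵥ* hessMatrix (fun y => eval y p) x = ((k : ℝ) - 1) • gradAt (fun y => eval y p) x := by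
  ext j
  simp only [vecMul, dotProduct, hessMatrix_eval, of_apply, gradAt, pderivAt_eval, Pi.smul_apply,
    smul_eq_mul]
  rw [hp.pderiv.sum_mul_eval_pderiv, Nat.cast_sub hk, Nat.cast_one]

end

theorem stmt8 (n k m : ℕ) (hk : 2 ≤ k) (hdvd : k ∣ 2 * (n + 1))
    (hm : k * m = (n + 1) * (k - 2))
    (c : ℝ) (P : MvPolynomial (Fin (n + 1)) ℝ) (hP : P.IsHomogeneous k)
    (hH : ∀ x : Fin (n + 1) → ℝ,
      hessDet (fun y => MvPolynomial.eval y P) x = c * (MvPolynomial.eval x P) ^ m) :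
    ∀ x : Fin (n + 1) → ℝ, MvPolynomial.eval x P ≠ 0 →
      hessDet (fun y => Real.log |MvPolynomial.eval y P|) x
        = (c / (1 - (k : ℝ))) * (MvPolynomial.eval x P) ^ (-((2 * (n + 1) / k : ℕ) : ℤ)) := by
  intro x hx
  have hk_ne : (1 : ℝ) - k ≠ 0 := by
    have : (2 : ℝ) ≤ k := by exact_mod_cast hk
    linarith
  have hdet := det_eq_one_sub_mul_det_sub_smul_vecMulVec hx
    (vecMul_hessMatrix_eval hP (by omega) x) (dotProduct_gradAt_eval hP x)
  rw [← hessDet, hH x, ← eq_div_iff (pow_ne_zero m hx)] at hdet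
  have hpow : (eval x P)⁻¹ ^ (n + 1) = (eval x P)⁻¹ ^ m * (eval x P)⁻¹ ^ (2 * (n + 1) / k) := by
    rw [← pow_add, add_two_mul_div_eq_of_mul_eq hk hdvd hm]
  rw [hessDet, hessMatrix_log_abs_eval P hx, det_smul, Fintype.card_fin, hpow, _root_.zpow_neg,
    zpow_natCast, hdet, inv_pow, inv_pow]
  field_simp
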